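/- Every finite word w has at most |w|+1 distinct palindromic factors (counting the empty word). -/

import Mathlib

open List

variable {A : Type*}

/-- All factors (contiguous subwords) of a word, as a list. -/
def Factors (w : List A) : List (List A) := w.tails.flatMap List.inits

/-- The set of distinct palindromic factors of `w` (including the empty word). -/
def palFactors [DecidableEq A] (w : List A) : Finset (List A) :=
  ((Factors w).filter (fun u => decide (u.reverse = u))).toFinset

/-- A word is rich if it has exactly `|w| + 1` distinct palindromic factors. -/
def IsRich [DecidableEq A] (w : List A) : Prop :=
  (palFactors w).card = w.length + 1

/-- The defect of a finite word. -/
def defect [DecidableEq A] (w : List A) : ℕ :=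
  w.length + 1 - (palFactors w).card

/-- `u` is a (finite) factor of the infinite word `z`. -/
def FactorOfInf (u : List A) (z : ℕ → A) : Prop :=
  ∃ i, u = (List.range u.length).map (fun k => z (i + k))

/-- An infinite word is rich if all of its finite factors are rich. -/
def InfRich [DecidableEq A] (z : ℕ → A) : Prop :=
  ∀ u : List A, FactorOfInf u z → IsRich u

/-- The longest palindromic suffix of `w`. -/
def lps [DecidableEq A] (w : List A) : List A :=
  (w.tails.find? (fun u => decide (u.reverse = u))).getD []

/-- The number of occurrences of `u` as a factor of `w` (counted by position). -/
def occCount [DecidableEq A] (u w : List A) : ℕ :=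
  w.tails.countP (fun t => decide (u <+: t))

/-- The periodic infinite word `u^∞`. -/
def periodicWord (u : List A) (hu : u ≠ []) : ℕ → A :=
  fun i => u.get ⟨i % u.length, Nat.mod_lt _ (List.length_pos_of_ne_nil hu)⟩

/-!
Extending `w` by one letter creates at most one new palindromic factor. A new palindrome
must be a suffix of `w ++ [a]`. Of two distinct palindromic suffixes, the shorter one is also
a proper prefix of the longer one (reverse the suffix relation), so it already occurs in `w`.
Hence only the longest palindromic suffix can be new, and induction on `w` gives the bound.
-/

namespace List

lemma IsSuffix.isPrefix_of_reverse_eq {u v : List A} (h : u <:+ v) (hu : u.reverse = u)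
    (hv : v.reverse = v) : u <+: v := by
  rw [← reverse_suffix, hu, hv]
  exact h

lemma IsPrefix.isInfix_of_ne_of_suffix_concat {u v w : List A} {a : A} (huv : u <+: v)
    (hne : u ≠ v) (hv : v <:+ w ++ [a]) : u <:+: w := by
  obtain rfl | ⟨s, rfl, hs⟩ := suffix_concat_iff.mp hv
  · exact absurd (prefix_nil.mp huv) hne
  · exact ((prefix_concat_iff.mp huv).resolve_left hne).isInfix.trans hs.isInfix

end List

section

variable [DecidableEq A]

lemma mem_palFactors {u w : List A} : u ∈ palFactors w ↔ u <:+: w ∧ u.reverse = u := by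
  simp only [palFactors, Factors, mem_toFinset, mem_filter, mem_flatMap, mem_tails, mem_inits,
    decide_eq_true_eq, infix_iff_prefix_suffix]
  tauto

lemma palFactors_nil : palFactors ([] : List A) = {[]} := by
  ext u
  simp only [mem_palFactors, infix_nil, Finset.mem_singleton, and_iff_left_iff_imp]
  rintro rfl
  rfl

lemma eq_of_isSuffix_of_not_mem_palFactors {u v w : List A} {a : A}
    (huv : u <:+ v) (hv : v <:+ w ++ [a]) (hupal : u.reverse = u) (hvpal : v.reverse = v)
    (hnew : u ∉ palFactors w) : u = v := by
  by_contra hne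
  exact hnew (mem_palFactors.mpr
    ⟨(huv.isPrefix_of_reverse_eq hupal hvpal).isInfix_of_ne_of_suffix_concat hne hv, hupal⟩)

lemma card_sdiff_palFactors_concat_le_one (w : List A) (a : A) :
    (palFactors (w ++ [a]) \ palFactors w).card ≤ 1 := by
  have isSuffix_of_new : ∀ u ∈ palFactors (w ++ [a]) \ palFactors w,
      u <:+ w ++ [a] ∧ u.reverse = u ∧ u ∉ palFactors w := by
    intro u hu
    obtain ⟨hmem, hnew⟩ := Finset.mem_sdiff.mp hu
    obtain ⟨hinf, hpal⟩ := mem_palFactors.mp hmem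
    refine ⟨(infix_concat_iff.mp hinf).resolve_right fun h => hnew ?_, hpal, hnew⟩
    exact mem_palFactors.mpr ⟨h, hpal⟩
  refine Finset.card_le_one.mpr fun u hu v hv => ?_
  obtain ⟨hu, hupal, hunew⟩ := isSuffix_of_new u hu
  obtain ⟨hv, hvpal, hvnew⟩ := isSuffix_of_new v hv
  rcases suffix_or_suffix_of_suffix hu hv with huv | hvu
  · exact eq_of_isSuffix_of_not_mem_palFactors huv hv hupal hvpal hunew
  · exact (eq_of_isSuffix_of_not_mem_palFactors hvu hu hvpal hupal hvnew).symm

end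

theorem palindromic_factors_le [DecidableEq A] (w : List A) :
    (palFactors w).card ≤ w.length + 1 := by
  induction w using List.reverseRecOn with
  | nil => simp [palFactors_nil]
  | append_singleton w a ih =>
    calc (palFactors (w ++ [a])).card
        ≤ (palFactors (w ++ [a]) \ palFactors w).card + (palFactors w).card :=
          Finset.card_le_card_sdiff_add_card
      _ ≤ 1 + (w.length + 1) := Nat.add_le_add (card_sdiff_palFactors_concat_le_one w a) ih
      _ = (w ++ [a]).length + 1 := by rw [length_append, length_singleton]; omega
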